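/- Let L be a Lagrangian of 𝐕_τ and write L = L_an ⊕ L_ra for a choice of F-complement L_ra. Then: (a) the E-span E·L_ra of L_ra in V is a nondegenerate quadratic E-subspace isomorphic to L_ra ⊗_F E; (b) dim_E(E·L) = dim_E V − k and dim_E(E·L_ra) = dim_E V − 2k, where k = dim_E L_an; (c) L_an is a Lagrangian of the orthogonal complement (E·L_ra)^⊥ in V. -/

import Mathlib

/-! The condition `tr(τ q(x, y)) = 0` forces `q` to be `F`-valued on `L`. Since `E = F ⊕ Fτ`, this
gives `L ∩ τL = L_an` and `E·M = M + τM` for every `F`-subspace `M`, whence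
`2 dim_E (E·M) = 2 dim_F M - dim_F (M ∩ τM)`. Applied to `L` and to `L_ra` (where
`L_ra ∩ τL_ra ⊆ L_an ∩ L_ra = 0`) this gives (b), the isomorphism in (a) by counting dimensions,
and (c) via `dim W^⊥ = dim V - dim W`. For the nondegeneracy of `E·L_ra`, the identity
`q(u + τv, y) = q(u, y) + τ q(v, y)` splits into `F`- and `τ`-parts, which puts `u, v ∈ L_ra`
into the radical `L_an`. -/

open Module Submodule Pointwise

section QuadraticExtension

variable {F E : Type*} [Field F] [Field E] [Algebra F E]

theorem eq_zero_of_algebraMap_add_smul_eq_zero {x : E} (hx : x ∉ Set.range (algebraMap F E))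
    {a b : F} (h : algebraMap F E a + b • x = 0) : a = 0 ∧ b = 0 := by
  by_cases hb : b = 0
  · subst hb
    simpa using h
  · refine absurd ⟨-a / b, ?_⟩ hx
    have hb' : algebraMap F E b ≠ 0 := (map_ne_zero _).mpr hb
    rw [Algebra.smul_def] at h
    rw [map_div₀, map_neg]
    field_simp
    linear_combination -h

theorem span_pair_one_eq_top (hquad : finrank F E = 2) {x : E}
    (hx : x ∉ Set.range (algebraMap F E)) : span F {1, x} = ⊤ := by
  have hli : LinearIndependent F ![(1 : E), x] :=
    LinearIndependent.pair_iff.mpr fun s t h =>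
      eq_zero_of_algebraMap_add_smul_eq_zero hx (by rwa [Algebra.algebraMap_eq_smul_one])
  simpa only [Matrix.range_cons_cons_empty] using
    hli.span_eq_top_of_card_eq_finrank (by simp [hquad])

variable [NeZero (2 : F)]

theorem notMem_range_algebraMap_of_trace_eq_zero (hquad : finrank F E = 2) {τ : E}
    (hτ : τ ≠ 0) (htr : Algebra.trace F E τ = 0) : τ ∉ Set.range (algebraMap F E) := by
  rintro ⟨a, rfl⟩
  rw [Algebra.trace_algebraMap, hquad, two_nsmul, ← two_mul] at htr
  exact hτ (by simp [(mul_eq_zero.mp htr).resolve_left two_ne_zero])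

/-- If `tr(τ e) = 0` with `e ∉ F`, then `e ↦ tr(τ e)` kills `span {1, e} = E`,
yet `tr(τ τ⁻¹) = 2`. -/
theorem mem_range_algebraMap_of_trace_mul_eq_zero (hquad : finrank F E = 2) {τ : E}
    (hτ : τ ≠ 0) (htr : Algebra.trace F E τ = 0) {e : E}
    (he : Algebra.trace F E (τ * e) = 0) : e ∈ Set.range (algebraMap F E) := by
  by_contra he'
  set f : E →ₗ[F] F := (Algebra.trace F E).comp (LinearMap.mulLeft F τ)
  have hker : span F {1, e} ≤ LinearMap.ker f := by
    rw [span_le, Set.insert_subset_iff, Set.singleton_subset_iff]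
    exact ⟨by simpa [f] using htr, he⟩
  rw [span_pair_one_eq_top hquad he'] at hker
  have : f τ⁻¹ = 0 := hker mem_top
  rw [LinearMap.comp_apply, LinearMap.mulLeft_apply, mul_inv_cancel₀ hτ,
    ← map_one (algebraMap F E), Algebra.trace_algebraMap, hquad, two_nsmul,
    one_add_one_eq_two] at this
  exact two_ne_zero this

end QuadraticExtension

section Restriction

variable {F E V : Type*} [Field F] [Field E] [Algebra F E]
  [AddCommGroup V] [Module E V] [Module F V] [IsScalarTower F E V]

theorem restrictScalars_span_eq_sup_smul {τ : E} (hspan : span F {1, τ} = ⊤)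
    (M : Submodule F V) : (span E (M : Set V)).restrictScalars F = M ⊔ τ • M := by
  rw [← span_smul_of_span_eq_top hspan, Set.insert_eq, Set.union_smul, Set.singleton_smul,
    Set.singleton_smul, one_smul, span_union, span_eq, ← coe_pointwise_smul, span_eq]

theorem finrank_restrictScalars (W : Submodule E V) :
    finrank F (W.restrictScalars F) = finrank F E * finrank E W := by
  rw [((restrictScalarsEquiv F E V W).restrictScalars F).finrank_eq, finrank_mul_finrank]

theorem finrank_pointwise_smul {τ : E} (hτ : τ ≠ 0) (M : Submodule F V) :
    finrank F ↥(τ • M) = finrank F M :=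
  (equivMapOfInjective (DistribSMul.toLinearMap F V τ) (smul_right_injective V hτ)
    M).finrank_eq.symm

theorem liftBaseChange_subtype_injective [FiniteDimensional E V] (M : Submodule F V)
    [FiniteDimensional F M] (h : finrank E (span E (M : Set V)) = finrank F M) :
    Function.Injective (M.subtype.liftBaseChange E) := by
  have hrank := LinearMap.finrank_range_add_finrank_ker (M.subtype.liftBaseChange E)
  rw [LinearMap.range_liftBaseChange, range_subtype, finrank_baseChange, h, add_eq_left,
    finrank_eq_zero] at hrank
  exact LinearMap.ker_eq_bot.mp hrank

variable [FiniteDimensional F V]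

theorem two_mul_finrank_span_add_finrank_inf_smul (hquad : finrank F E = 2) {τ : E}
    (hτ : τ ≠ 0) (hspan : span F {1, τ} = ⊤) (M : Submodule F V) :
    2 * finrank E (span E (M : Set V)) + finrank F ↥(M ⊓ τ • M) = 2 * finrank F M := by
  have := finrank_sup_add_finrank_inf_eq M (τ • M)
  rw [← restrictScalars_span_eq_sup_smul hspan, finrank_restrictScalars, hquad,
    finrank_pointwise_smul hτ] at this
  omega

end Restriction

section Radical

variable {F E V : Type*} [Field F] [Field E] [AddCommGroup V] [Module E V] [Module F V]
  (q : LinearMap.BilinForm E V) {L Lra : Submodule F V} {Lan : Submodule E V}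

theorem le_orthogonal_span (hsymm : q.IsSymm)
    (hLan : ∀ x, x ∈ Lan ↔ x ∈ L ∧ ∀ y ∈ L, q x y = 0) (hLra : Lra ≤ L) :
    Lan ≤ q.orthogonal (span E (Lra : Set V)) := by
  intro z hz y hy
  have hker : span E (Lra : Set V) ≤ LinearMap.ker (q.flip z) := span_le.mpr fun y hy => by
    change q y z = 0
    rw [hsymm.eq]
    exact ((hLan z).mp hz).2 y (hLra hy)
  exact hker hy

variable [Algebra F E] {τ : E}

theorem eq_zero_and_eq_zero_of_add_smul_eq_zero (hτ : τ ∉ Set.range (algebraMap F E))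
    (hqF : ∀ x ∈ L, ∀ y ∈ L, q x y ∈ Set.range (algebraMap F E)) {u v y : V} (hu : u ∈ L)
    (hv : v ∈ L) (hy : y ∈ L) (h : q (u + τ • v) y = 0) : q u y = 0 ∧ q v y = 0 := by
  obtain ⟨a, ha⟩ := hqF u hu y hy
  obtain ⟨b, hb⟩ := hqF v hv y hy
  have h0 : algebraMap F E a + b • τ = 0 := by
    rw [ha, Algebra.smul_def, hb, mul_comm, ← h, map_add, map_smul, LinearMap.add_apply,
      LinearMap.smul_apply, smul_eq_mul]
  obtain ⟨rfl, rfl⟩ := eq_zero_of_algebraMap_add_smul_eq_zero hτ h0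
  exact ⟨by rw [← ha, map_zero], by rw [← hb, map_zero]⟩

variable [IsScalarTower F E V]

theorem eq_zero_of_mem_complement_of_forall_eq_zero (hsymm : q.IsSymm)
    (hLan : ∀ x, x ∈ Lan ↔ x ∈ L ∧ ∀ y ∈ L, q x y = 0)
    (hcompl₁ : Lan.restrictScalars F ⊓ Lra = ⊥) (hcompl₂ : Lan.restrictScalars F ⊔ Lra = L) :
    ∀ w ∈ Lra, (∀ y ∈ Lra, q w y = 0) → w = 0 := by
  intro w hw h
  have hwLan : w ∈ Lan := by
    refine (hLan w).mpr ⟨hcompl₂ ▸ mem_sup_right hw, fun z hz => ?_⟩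
    obtain ⟨z₁, hz₁, z₂, hz₂, rfl⟩ := mem_sup.mp (hcompl₂ ▸ hz)
    rw [map_add, h z₂ hz₂, add_zero, hsymm.eq]
    exact ((hLan z₁).mp hz₁).2 w (hcompl₂ ▸ mem_sup_right hw)
  exact (mem_bot F).mp (hcompl₁ ▸ mem_inf.mpr ⟨hwLan, hw⟩)

theorem inf_pointwise_smul_eq_restrictScalars (hτ : τ ∉ Set.range (algebraMap F E))
    (hqF : ∀ x ∈ L, ∀ y ∈ L, q x y ∈ Set.range (algebraMap F E))
    (hLan : ∀ x, x ∈ Lan ↔ x ∈ L ∧ ∀ y ∈ L, q x y = 0) :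
    L ⊓ τ • L = Lan.restrictScalars F := by
  have hτ0 : τ ≠ 0 := fun h => hτ ⟨0, by rw [h, map_zero]⟩
  refine le_antisymm ?_ fun x hx => ?_
  · rintro x ⟨hxL, hx⟩
    obtain ⟨y, hyL, rfl⟩ := (mem_smul_pointwise_iff_exists _ _ _).mp hx
    refine (hLan _).mpr ⟨hxL, fun z hz => ?_⟩
    have h0 : q (τ • y + τ • -y) z = 0 := by
      rw [smul_neg, add_neg_cancel, map_zero, LinearMap.zero_apply]
    exact (eq_zero_and_eq_zero_of_add_smul_eq_zero q hτ hqF hxL (neg_mem hyL) hz h0).1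
  · exact ⟨((hLan x).mp hx).1, τ⁻¹ • x, ((hLan _).mp (Lan.smul_mem τ⁻¹ hx)).1,
      smul_inv_smul₀ hτ0 x⟩

theorem eq_zero_of_mem_span_complement_of_forall_eq_zero (hspan : span F {1, τ} = ⊤)
    (hτ : τ ∉ Set.range (algebraMap F E))
    (hqF : ∀ x ∈ L, ∀ y ∈ L, q x y ∈ Set.range (algebraMap F E)) (hsymm : q.IsSymm)
    (hLan : ∀ x, x ∈ Lan ↔ x ∈ L ∧ ∀ y ∈ L, q x y = 0)
    (hcompl₁ : Lan.restrictScalars F ⊓ Lra = ⊥) (hcompl₂ : Lan.restrictScalars F ⊔ Lra = L) :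
    ∀ x ∈ span E (Lra : Set V), (∀ y ∈ span E (Lra : Set V), q x y = 0) → x = 0 := by
  intro x hx h
  have hLra : Lra ≤ L := hcompl₂ ▸ le_sup_right
  rw [← restrictScalars_mem F, restrictScalars_span_eq_sup_smul hspan] at hx
  obtain ⟨u, hu, _, hτv, rfl⟩ := mem_sup.mp hx
  obtain ⟨v, hv, rfl⟩ := (mem_smul_pointwise_iff_exists _ _ _).mp hτv
  have huv : ∀ y ∈ Lra, q u y = 0 ∧ q v y = 0 := fun y hy =>
    eq_zero_and_eq_zero_of_add_smul_eq_zero q hτ hqF (hLra hu) (hLra hv) (hLra hy)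
      (h y (subset_span hy))
  have hzero := eq_zero_of_mem_complement_of_forall_eq_zero q hsymm hLan hcompl₁ hcompl₂
  rw [hzero u hu fun y hy => (huv y hy).1, hzero v hv fun y hy => (huv y hy).2, smul_zero,
    add_zero]

end Radical

/-- Let `L` be a Lagrangian of `𝐕_τ`, written `L = L_an ⊕ L_ra` for an
`F`-complement `L_ra` of the radical `L_an` (an `E`-subspace).  With `k = dim_E L_an`:
(a) the `E`-span of `L_ra` is a nondegenerate quadratic `E`-subspace isomorphic to
`E ⊗_F L_ra`; (b) `dim_E (E·L) = dim_E V − k` and `dim_E (E·L_ra) = dim_E V − 2k`;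
(c) `L_an` is a Lagrangian of the orthogonal complement `(E·L_ra)^⊥` in `V`. -/
theorem stmt4
    (F E V : Type*) [Field F] [Field E] [Algebra F E] [CharZero F]
    (hquad : Module.finrank F E = 2)
    (τ : E) (hτ : τ ≠ 0) (htr : Algebra.trace F E τ = 0)
    [AddCommGroup V] [Module E V] [Module F V] [IsScalarTower F E V]
    [FiniteDimensional E V]
    (q : LinearMap.BilinForm E V) (hsymm : q.IsSymm) (hnd : q.Nondegenerate)
    (L : Submodule F V)
    (hiso : ∀ x ∈ L, ∀ y ∈ L, Algebra.trace F E (τ * q x y) = 0)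
    (hdim : 2 * Module.finrank F L = Module.finrank F V)
    (Lan : Submodule E V)
    (hLan : (Lan : Set V) = {x | x ∈ L ∧ ∀ y ∈ L, q x y = 0})
    (Lra : Submodule F V)
    (hcompl₁ : Lan.restrictScalars F ⊓ Lra = ⊥)
    (hcompl₂ : Lan.restrictScalars F ⊔ Lra = L)
    (k : ℕ) (hk : k = Module.finrank E Lan) :
    -- (a) E·L_ra ≅ E ⊗_F L_ra and it is nondegenerate
    (LinearMap.range ((Lra.subtype).liftBaseChange E) = Submodule.span E (Lra : Set V) ∧
      Function.Injective ((Lra.subtype).liftBaseChange E) ∧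
      (∀ x ∈ Submodule.span E (Lra : Set V),
        (∀ y ∈ Submodule.span E (Lra : Set V), q x y = 0) → x = 0)) ∧
    -- (b) dimension formulas
    (Module.finrank E (Submodule.span E (L : Set V)) = Module.finrank E V - k ∧
      Module.finrank E (Submodule.span E (Lra : Set V)) = Module.finrank E V - 2 * k) ∧
    -- (c) L_an is a Lagrangian of (E·L_ra)^⊥
    ((∀ x ∈ Lan, ∀ y ∈ Lan, q x y = 0) ∧
      Lan ≤ LinearMap.BilinForm.orthogonal q (Submodule.span E (Lra : Set V)) ∧
      2 * k = Module.finrank E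
        (LinearMap.BilinForm.orthogonal q (Submodule.span E (Lra : Set V)))) := by
  have : FiniteDimensional F E := .of_finrank_eq_succ hquad
  have : FiniteDimensional F V := .trans F E V
  have hτF := notMem_range_algebraMap_of_trace_eq_zero hquad hτ htr
  have hspan := span_pair_one_eq_top hquad hτF
  have hqF : ∀ x ∈ L, ∀ y ∈ L, q x y ∈ Set.range (algebraMap F E) := fun x _ y _ =>
    mem_range_algebraMap_of_trace_mul_eq_zero hquad hτ htr (hiso x ‹_› y ‹_›)
  have hLan' : ∀ x, x ∈ Lan ↔ x ∈ L ∧ ∀ y ∈ L, q x y = 0 := fun x => Set.ext_iff.mp hLan x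
  have hLra : Lra ≤ L := hcompl₂ ▸ le_sup_right
  have hinter := inf_pointwise_smul_eq_restrictScalars q hτF hqF hLan'
  have hinter_ra : Lra ⊓ τ • Lra = ⊥ := eq_bot_iff.mpr <| hcompl₁ ▸
    le_inf (hinter ▸ inf_le_inf hLra (smul_mono_right τ hLra)) inf_le_left
  have hV : finrank F V = 2 * finrank E V := by rw [← finrank_mul_finrank F E V, hquad]
  have hLan_dim : finrank F (Lan.restrictScalars F) = 2 * k := by
    rw [finrank_restrictScalars, hquad, hk]
  have hLra_dim := finrank_sup_add_finrank_inf_eq (Lan.restrictScalars F) Lra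
  have hL_span := two_mul_finrank_span_add_finrank_inf_smul hquad hτ hspan L
  have hLra_span := two_mul_finrank_span_add_finrank_inf_smul hquad hτ hspan Lra
  rw [hcompl₁, hcompl₂, finrank_bot] at hLra_dim
  rw [hinter] at hL_span
  rw [hinter_ra, finrank_bot] at hLra_span
  have hspan_Lra : finrank E (span E (Lra : Set V)) = finrank E V - 2 * k := by omega
  refine ⟨⟨by rw [LinearMap.range_liftBaseChange, range_subtype],
      liftBaseChange_subtype_injective Lra (by omega),
      eq_zero_of_mem_span_complement_of_forall_eq_zero q hspan hτF hqF hsymm hLan' hcompl₁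
        hcompl₂⟩,
    ⟨by omega, hspan_Lra⟩,
    fun x hx y hy => ((hLan' x).mp hx).2 y ((hLan' y).mp hy).1,
    le_orthogonal_span q hsymm hLan' hLra, ?_⟩
  rw [LinearMap.BilinForm.finrank_orthogonal hnd, hspan_Lra]
  omega
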